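/- arXiv:1611.08778 — 2 statements merged into one kernel-verified Lean document; each statement's English description precedes it below -/
import Mathlib

section
/- Let J ≥ 1, α > 0, h > 0, λ ∈ ℝ, and let A = −Â, where Â is the J×J real symmetric tridiagonal matrix with 2 on the diagonal and −1 on the sub- and superdiagonals. If Ψ : [0,∞) → ℂ^J is differentiable and satisfies Ψ'(t) = i( h^{−2} A Ψ(t) + i α Ψ(t) + λ F(Ψ(t)) Ψ(t) ) for all t ≥ 0, then ‖Ψ(t)‖² = e^{−2αt} ‖Ψ(0)‖² for all t ≥ 0. -/
/-!
Differentiating the mass `‖Ψ‖² = ∑ |Ψ_j|²` along the flow gives `2 Re ⟨Ψ, Ψ'⟩`. The discrete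
Laplacian is real symmetric, hence Hermitian, so `⟨Ψ, AΨ⟩` is real and the factor `i` in front of
it makes its contribution purely imaginary; the cubic term `λ |Ψ_j|⁴` is real for the same reason.
Only the damping survives, so the mass solves `E' = -2αE` and decays like `e^{-2αt}`.
-/

/-- The `J × J` tridiagonal matrix with `2` on the diagonal and `-1` on the
sub- and superdiagonals. -/
def Ahat (J : ℕ) : Matrix (Fin J) (Fin J) ℝ :=
  Matrix.of fun i j =>
    if i = j then 2
    else if (i.val : ℤ) - j.val = 1 ∨ (j.val : ℤ) - i.val = 1 then -1
    else 0

open Complex ComplexConjugate Matrix Set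

lemma Ahat_isSymm (J : ℕ) : (Ahat J).IsSymm := by
  refine IsSymm.ext fun i j => ?_
  simp only [Ahat, of_apply, eq_comm (a := i), or_comm]

lemma isHermitian_neg_Ahat_map_ofReal (J : ℕ) :
    (-((Ahat J).map (fun a => (a : ℂ)))).IsHermitian :=
  ((isHermitian_iff_isSymm.mpr (Ahat_isSymm J)).map _ fun a => (conj_ofReal a).symm).neg

lemma eq_exp_mul_smul_of_hasDerivWithinAt_Ici {E : Type*} [NormedAddCommGroup E]
    [NormedSpace ℝ E] {f : ℝ → E} {c : ℝ}
    (hf : ∀ t, 0 ≤ t → HasDerivWithinAt f (c • f t) (Ici 0) t) :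
    ∀ t, 0 ≤ t → f t = Real.exp (c * t) • f 0 := by
  intro t ht
  set g : ℝ → E := fun u => Real.exp (-c * u) • f u
  have hg : ∀ u, 0 ≤ u → HasDerivWithinAt g 0 (Ici 0) u := by
    intro u hu
    have hexp : HasDerivAt (fun u => Real.exp (-c * u)) (Real.exp (-c * u) * -c) u := by
      simpa only [mul_comm, id, mul_one] using ((hasDerivAt_id u).const_mul (-c)).exp
    refine (hexp.hasDerivWithinAt.smul (hf u hu)).congr_deriv ?_
    rw [smul_smul, ← add_smul, mul_neg, add_neg_cancel, zero_smul]
  have hconst := constant_of_has_deriv_right_zero (f := g) (a := 0) (b := t)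
    (fun u hu => (hg u hu.1).continuousWithinAt.mono Icc_subset_Ici_self)
    (fun u hu => (hg u hu.1).mono (Ici_subset_Ici.mpr hu.1)) t (right_mem_Icc.mpr ht)
  simp only [g, mul_zero, Real.exp_zero, one_smul] at hconst
  rw [← hconst, smul_smul, ← Real.exp_add, neg_mul, add_neg_cancel, Real.exp_zero, one_smul]

lemma hasDerivWithinAt_sum_norm_sq {ι : Type*} [Fintype ι] {Ψ : ℝ → ι → ℂ} {D : ι → ℂ}
    {s : Set ℝ} {t : ℝ} (hΨ : ∀ j, HasDerivWithinAt (fun u => Ψ u j) (D j) s t) :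
    HasDerivWithinAt (fun u => ∑ j, ‖Ψ u j‖ ^ 2) (2 * ∑ j, (conj (Ψ t j) * D j).re) s t := by
  refine (HasDerivWithinAt.fun_sum fun j _ => (hΨ j).norm_sq).congr_deriv ?_
  simp only [Finset.mul_sum, Complex.inner, mul_comm]

lemma re_conj_mul_I_mul (z a : ℂ) (α lam : ℝ) :
    (conj z * (I * (a + I * α * z + lam * (‖z‖ : ℂ) ^ 2 * z))).re
      = -(conj z * a).im - α * ‖z‖ ^ 2 := by
  have hz : ‖z‖ ^ 2 = z.re ^ 2 + z.im ^ 2 := by rw [Complex.sq_norm, normSq_apply]; ring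
  simp only [← ofReal_pow, mul_add, add_mul, add_re, mul_re, mul_im, I_re, I_im, ofReal_re,
    ofReal_im, conj_re, conj_im]
  rw [hz]
  ring

lemma hasDerivWithinAt_sum_norm_sq_of_damped_nls {ι : Type*} [Fintype ι]
    {A : Matrix ι ι ℂ} (hA : A.IsHermitian) {c α lam : ℝ} {Ψ : ℝ → ι → ℂ} {s : Set ℝ} {t : ℝ}
    (hΨ : ∀ j, HasDerivWithinAt (fun u => Ψ u j)
      (I * ((c : ℂ)⁻¹ * (A *ᵥ Ψ t) j + I * α * Ψ t j + lam * (‖Ψ t j‖ : ℂ) ^ 2 * Ψ t j))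
      s t) :
    HasDerivWithinAt (fun u => ∑ j, ‖Ψ u j‖ ^ 2) (-2 * α * ∑ j, ‖Ψ t j‖ ^ 2) s t := by
  refine (hasDerivWithinAt_sum_norm_sq hΨ).congr_deriv ?_
  have hreal : ∑ j, (conj (Ψ t j) * ((c : ℂ)⁻¹ * (A *ᵥ Ψ t) j)).im = 0 := by
    have := hA.im_star_dotProduct_mulVec_self (Ψ t)
    simp only [dotProduct, RCLike.im_to_complex, im_sum, Pi.star_apply, RCLike.star_def] at this
    simp_rw [mul_left_comm _ ((c : ℂ)⁻¹), ← ofReal_inv, im_ofReal_mul, ← Finset.mul_sum, this,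
      mul_zero]
  simp only [re_conj_mul_I_mul, Finset.sum_sub_distrib, Finset.sum_neg_distrib, hreal,
    ← Finset.mul_sum]
  ring

theorem stmt_4_general (J : ℕ) (α h : ℝ) (lam : ℝ)
    (A : Matrix (Fin J) (Fin J) ℂ) (hA : A = -((Ahat J).map (fun a => (a : ℂ))))
    (Ψ : ℝ → Fin J → ℂ)
    (hode : ∀ t : ℝ, 0 ≤ t → ∀ j : Fin J,
      HasDerivWithinAt (fun s : ℝ => Ψ s j)
        (Complex.I * (((h ^ 2 : ℝ) : ℂ)⁻¹ * A.mulVec (Ψ t) j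
          + Complex.I * (α : ℂ) * Ψ t j
          + (lam : ℂ) * ((‖Ψ t j‖ : ℂ)) ^ 2 * Ψ t j))
        (Set.Ici (0 : ℝ)) t) :
    ∀ t : ℝ, 0 ≤ t →
      ∑ j, ‖Ψ t j‖ ^ 2
        = Real.exp (-2 * α * t) * ∑ j, ‖Ψ 0 j‖ ^ 2 := by
  subst hA
  exact eq_exp_mul_smul_of_hasDerivWithinAt_Ici fun t ht =>
    hasDerivWithinAt_sum_norm_sq_of_damped_nls (isHermitian_neg_Ahat_map_ofReal J) (hode t ht)

/-- if `Ψ : [0,∞) → ℂ^J` is differentiable and solves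
`Ψ' = i (h⁻² A Ψ + i α Ψ + λ F(Ψ) Ψ)` with `A = -Â`, then
`‖Ψ(t)‖² = e^{-2 α t} ‖Ψ(0)‖²` for all `t ≥ 0`. -/
theorem stmt_4 (J : ℕ) (hJ : 1 ≤ J) (α h : ℝ) (hα : 0 < α) (hh : 0 < h) (lam : ℝ)
    (A : Matrix (Fin J) (Fin J) ℂ) (hA : A = -((Ahat J).map (fun a => (a : ℂ))))
    (Ψ : ℝ → Fin J → ℂ)
    (hode : ∀ t : ℝ, 0 ≤ t → ∀ j : Fin J,
      HasDerivWithinAt (fun s : ℝ => Ψ s j)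
        (Complex.I * (((h ^ 2 : ℝ) : ℂ)⁻¹ * A.mulVec (Ψ t) j
          + Complex.I * (α : ℂ) * Ψ t j
          + (lam : ℂ) * ((‖Ψ t j‖ : ℂ)) ^ 2 * Ψ t j))
        (Set.Ici (0 : ℝ)) t) :
    ∀ t : ℝ, 0 ≤ t →
      ∑ j, ‖Ψ t j‖ ^ 2
        = Real.exp (-2 * α * t) * ∑ j, ‖Ψ 0 j‖ ^ 2 :=
  stmt_4_general J α h lam A hA Ψ hode
end

section
/- Let J ≥ 1, R > 0, L ≥ 0, and let θ : ℝ → ℝ satisfy 0 ≤ θ(x) ≤ 1 for all x, θ(x) = 0 for all x ≥ 2, and |θ(x) − θ(y)| ≤ L|x − y| for all x, y. Then the map G_R : ℂ^J → ℂ^J defined by G_R(v) = θ(‖v‖/R) F(v) v (i.e. componentwise G_R(v)_j = θ(‖v‖/R) |v_j|² v_j) is globally Lipschitz: ‖G_R(u) − G_R(v)‖ ≤ (12 + 8L) R² ‖u − v‖ for all u, v ∈ ℂ^J. -/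
/-!
With `‖v‖ ≤ ‖u‖` and `θ_w = θ(‖w‖/R)`, split
`G(u) - G(v) = θ_u (F(u)u - F(v)v) + (θ_u - θ_v) F(v)v`.
The first term vanishes unless `‖u‖ ≤ 2R`, and on the ball of radius `2R` the cubic map
`v ↦ F(v)v` is `12R²`-Lipschitz. The second vanishes unless `‖v‖ ≤ 2R`, and then
`‖F(v)v‖ ≤ ‖v‖³ ≤ 8R³` while `|θ_u - θ_v| ≤ L‖u - v‖/R`.
-/

section CubicDifference

variable {E : Type*} [SeminormedAddCommGroup E] [NormedSpace ℝ E]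

theorem norm_sq_smul_sub_norm_sq_smul_le (a b : E) :
    ‖‖a‖ ^ 2 • a - ‖b‖ ^ 2 • b‖ ≤ (‖a‖ ^ 2 + ‖a‖ * ‖b‖ + ‖b‖ ^ 2) * ‖a - b‖ := by
  have hsplit : ‖a‖ ^ 2 • a - ‖b‖ ^ 2 • b = ‖a‖ ^ 2 • (a - b) + (‖a‖ ^ 2 - ‖b‖ ^ 2) • b := by
    module
  have hdiff : |‖a‖ ^ 2 - ‖b‖ ^ 2| ≤ (‖a‖ + ‖b‖) * ‖a - b‖ := by
    rw [sq_sub_sq, abs_mul, abs_of_nonneg (by positivity)]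
    exact mul_le_mul_of_nonneg_left (abs_norm_sub_norm_le a b) (by positivity)
  calc _ ≤ ‖a‖ ^ 2 * ‖a - b‖ + |‖a‖ ^ 2 - ‖b‖ ^ 2| * ‖b‖ := by
        rw [hsplit]
        refine (norm_add_le _ _).trans_eq ?_
        rw [norm_smul, norm_smul, Real.norm_eq_abs, Real.norm_eq_abs, abs_sq]
    _ ≤ ‖a‖ ^ 2 * ‖a - b‖ + (‖a‖ + ‖b‖) * ‖a - b‖ * ‖b‖ := by gcongr
    _ = _ := by ring

end CubicDifference

namespace EuclideanSpace

variable {𝕜 ι : Type*} [RCLike 𝕜] [Fintype ι]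

theorem norm_le_mul_norm_of_forall_norm_apply_le {x y : EuclideanSpace 𝕜 ι} {C : ℝ}
    (hC : 0 ≤ C) (h : ∀ i, ‖x i‖ ≤ C * ‖y i‖) : ‖x‖ ≤ C * ‖y‖ := by
  refine le_of_pow_le_pow_left₀ two_ne_zero (by positivity) ?_
  rw [mul_pow, EuclideanSpace.norm_sq_eq, EuclideanSpace.norm_sq_eq, Finset.mul_sum]
  gcongr with i
  rw [← mul_pow]
  exact pow_le_pow_left₀ (norm_nonneg _) (h i) 2

end EuclideanSpace

variable {𝕜 ι : Type*} [RCLike 𝕜] [Fintype ι]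

/-- The map `v ↦ F(v) v` with `F(v) = diag(|v_1|², …, |v_J|²)`. -/
def cubicNonlinearity (v : EuclideanSpace 𝕜 ι) : EuclideanSpace 𝕜 ι :=
  WithLp.toLp 2 fun i => ‖v i‖ ^ 2 • v i

theorem norm_cubicNonlinearity_le (v : EuclideanSpace 𝕜 ι) :
    ‖cubicNonlinearity v‖ ≤ ‖v‖ ^ 3 := by
  rw [pow_succ]
  refine EuclideanSpace.norm_le_mul_norm_of_forall_norm_apply_le (by positivity) fun i => ?_
  rw [cubicNonlinearity, PiLp.toLp_apply, norm_smul, Real.norm_eq_abs, abs_sq]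
  gcongr
  exact PiLp.norm_apply_le v i

theorem norm_cubicNonlinearity_sub_le {u v : EuclideanSpace 𝕜 ι} {M : ℝ} (hu : ‖u‖ ≤ M)
    (hv : ‖v‖ ≤ M) : ‖cubicNonlinearity u - cubicNonlinearity v‖ ≤ 3 * M ^ 2 * ‖u - v‖ := by
  have hM : 0 ≤ M := (norm_nonneg u).trans hu
  refine EuclideanSpace.norm_le_mul_norm_of_forall_norm_apply_le (by positivity) fun i => ?_
  have hui : ‖u i‖ ≤ M := (PiLp.norm_apply_le u i).trans hu
  have hvi : ‖v i‖ ≤ M := (PiLp.norm_apply_le v i).trans hv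
  rw [cubicNonlinearity, cubicNonlinearity, PiLp.sub_apply, PiLp.toLp_apply, PiLp.toLp_apply,
    PiLp.sub_apply]
  refine (norm_sq_smul_sub_norm_sq_smul_le (u i) (v i)).trans ?_
  gcongr
  nlinarith [norm_nonneg (u i), norm_nonneg (v i), mul_le_mul hui hvi (norm_nonneg _) hM]

section Truncation

variable {E F : Type*} [SeminormedAddCommGroup E] [SeminormedAddCommGroup F]
  {θ : ℝ → ℝ} {N : E → F} {R L K : ℝ}

theorem cutoff_div_eq_zero (hR : 0 < R) (hθ0 : ∀ x, 2 ≤ x → θ x = 0) {r : ℝ} (hr : 2 * R ≤ r) :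
    θ (r / R) = 0 :=
  hθ0 _ ((le_div_iff₀ hR).2 (by linarith))

theorem abs_cutoff_mul_norm_sub_le (hR : 0 < R) (hK : 0 ≤ K) (hθ1 : ∀ x, |θ x| ≤ 1)
    (hθ0 : ∀ x, 2 ≤ x → θ x = 0)
    (hN : ∀ M u v, ‖u‖ ≤ M → ‖v‖ ≤ M → ‖N u - N v‖ ≤ K * M ^ 2 * ‖u - v‖)
    {u v : E} (huv : ‖v‖ ≤ ‖u‖) :
    |θ (‖u‖ / R)| * ‖N u - N v‖ ≤ 4 * K * R ^ 2 * ‖u - v‖ := by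
  rcases le_or_gt ‖u‖ (2 * R) with hu | hu
  · calc |θ (‖u‖ / R)| * ‖N u - N v‖ ≤ 1 * (K * (2 * R) ^ 2 * ‖u - v‖) :=
          mul_le_mul (hθ1 _) (hN _ u v hu (huv.trans hu)) (norm_nonneg _) zero_le_one
      _ = 4 * K * R ^ 2 * ‖u - v‖ := by ring
  · rw [cutoff_div_eq_zero hR hθ0 hu.le, abs_zero, zero_mul]
    positivity

theorem abs_cutoff_sub_mul_norm_le (hR : 0 < R) (hL : 0 ≤ L) (hθ0 : ∀ x, 2 ≤ x → θ x = 0)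
    (hθL : ∀ x y : ℝ, |θ x - θ y| ≤ L * |x - y|) (hN : ∀ v, ‖N v‖ ≤ ‖v‖ ^ 3)
    {u v : E} (huv : ‖v‖ ≤ ‖u‖) :
    |θ (‖u‖ / R) - θ (‖v‖ / R)| * ‖N v‖ ≤ 8 * L * R ^ 2 * ‖u - v‖ := by
  rcases le_or_gt ‖v‖ (2 * R) with hv | hv
  · have hθdiff : |θ (‖u‖ / R) - θ (‖v‖ / R)| ≤ L * ‖u - v‖ / R := by
      calc |θ (‖u‖ / R) - θ (‖v‖ / R)| ≤ L * (|‖u‖ - ‖v‖| / R) := by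
            simpa only [← sub_div, abs_div, abs_of_pos hR] using hθL (‖u‖ / R) (‖v‖ / R)
        _ ≤ L * (‖u - v‖ / R) := by gcongr; exact abs_norm_sub_norm_le u v
        _ = L * ‖u - v‖ / R := by ring
    have hNv : ‖N v‖ ≤ (2 * R) ^ 3 := (hN v).trans (by gcongr)
    calc |θ (‖u‖ / R) - θ (‖v‖ / R)| * ‖N v‖ ≤ L * ‖u - v‖ / R * (2 * R) ^ 3 := by
          gcongr
      _ = 8 * L * R ^ 2 * ‖u - v‖ := by field_simp; ring
  · rw [cutoff_div_eq_zero hR hθ0 (hv.le.trans huv), cutoff_div_eq_zero hR hθ0 hv.le, sub_zero,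
      abs_zero, zero_mul]
    positivity

theorem norm_cutoff_smul_sub_le [NormedSpace ℝ F] (hR : 0 < R) (hL : 0 ≤ L) (hK : 0 ≤ K)
    (hθ1 : ∀ x, |θ x| ≤ 1) (hθ0 : ∀ x, 2 ≤ x → θ x = 0) (hθL : ∀ x y : ℝ, |θ x - θ y| ≤ L * |x - y|)
    (hN_sub : ∀ M u v, ‖u‖ ≤ M → ‖v‖ ≤ M → ‖N u - N v‖ ≤ K * M ^ 2 * ‖u - v‖)
    (hN : ∀ v, ‖N v‖ ≤ ‖v‖ ^ 3) (u v : E) :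
    ‖θ (‖u‖ / R) • N u - θ (‖v‖ / R) • N v‖ ≤ (4 * K + 8 * L) * R ^ 2 * ‖u - v‖ := by
  wlog huv : ‖v‖ ≤ ‖u‖ generalizing u v
  · rw [norm_sub_rev, norm_sub_rev u]
    exact this v u (le_of_not_ge huv)
  calc ‖θ (‖u‖ / R) • N u - θ (‖v‖ / R) • N v‖
      = ‖θ (‖u‖ / R) • (N u - N v) + (θ (‖u‖ / R) - θ (‖v‖ / R)) • N v‖ := by
        congr 1; module
    _ ≤ |θ (‖u‖ / R)| * ‖N u - N v‖ + |θ (‖u‖ / R) - θ (‖v‖ / R)| * ‖N v‖ := by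
        refine (norm_add_le _ _).trans_eq ?_
        rw [norm_smul, norm_smul, Real.norm_eq_abs, Real.norm_eq_abs]
    _ ≤ 4 * K * R ^ 2 * ‖u - v‖ + 8 * L * R ^ 2 * ‖u - v‖ :=
        add_le_add (abs_cutoff_mul_norm_sub_le hR hK hθ1 hθ0 hN_sub huv)
          (abs_cutoff_sub_mul_norm_le hR hL hθ0 hθL hN huv)
    _ = (4 * K + 8 * L) * R ^ 2 * ‖u - v‖ := by ring

end Truncation

theorem stmt_12_general (J : ℕ) (R L : ℝ) (hR : 0 < R) (hL : 0 ≤ L)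
    (θ : ℝ → ℝ) (hθ01 : ∀ x, 0 ≤ θ x ∧ θ x ≤ 1) (hθ0 : ∀ x, 2 ≤ x → θ x = 0)
    (hθL : ∀ x y : ℝ, |θ x - θ y| ≤ L * |x - y|)
    (G : (Fin J → ℂ) → (Fin J → ℂ))
    (hG : ∀ (v : Fin J → ℂ) (j : Fin J),
      G v j = ((θ (Real.sqrt (∑ i, ‖v i‖ ^ 2) / R) : ℝ) : ℂ)
        * ((‖v j‖ : ℝ) : ℂ) ^ 2 * v j) :
    ∀ u v : Fin J → ℂ,
      Real.sqrt (∑ j, ‖G u j - G v j‖ ^ 2)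
        ≤ (12 + 8 * L) * R ^ 2 * Real.sqrt (∑ j, ‖u j - v j‖ ^ 2) := by
  intro u v
  have hθ1 (x : ℝ) : |θ x| ≤ 1 := abs_le.2 ⟨by linarith [(hθ01 x).1], (hθ01 x).2⟩
  have hG_eq (w : Fin J → ℂ) : WithLp.toLp 2 (G w) = θ (‖WithLp.toLp 2 w‖ / R) •
      cubicNonlinearity (WithLp.toLp 2 w : EuclideanSpace ℂ (Fin J)) := by
    ext j
    simp [hG, cubicNonlinearity, EuclideanSpace.norm_eq, Complex.real_smul, mul_assoc]
  have key := norm_cutoff_smul_sub_le hR hL (by norm_num : (0 : ℝ) ≤ 3) hθ1 hθ0 hθL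
    (fun _ _ _ => norm_cubicNonlinearity_sub_le) norm_cubicNonlinearity_le
    (WithLp.toLp 2 u : EuclideanSpace ℂ (Fin J)) (WithLp.toLp 2 v)
  rw [← hG_eq, ← hG_eq] at key
  norm_num [EuclideanSpace.norm_eq] at key
  exact key

/-- global Lipschitz continuity of the truncated nonlinearity
`G_R(v)_j = θ(‖v‖/R) |v_j|² v_j`: if `0 ≤ θ ≤ 1`, `θ(x) = 0` for `x ≥ 2` and `θ`
is `L`-Lipschitz, then `‖G_R(u) - G_R(v)‖ ≤ (12 + 8L) R² ‖u - v‖` for all `u, v ∈ ℂ^J`. -/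
theorem stmt_12 (J : ℕ) (hJ : 1 ≤ J) (R L : ℝ) (hR : 0 < R) (hL : 0 ≤ L)
    (θ : ℝ → ℝ) (hθ01 : ∀ x, 0 ≤ θ x ∧ θ x ≤ 1) (hθ0 : ∀ x, 2 ≤ x → θ x = 0)
    (hθL : ∀ x y : ℝ, |θ x - θ y| ≤ L * |x - y|)
    (G : (Fin J → ℂ) → (Fin J → ℂ))
    (hG : ∀ (v : Fin J → ℂ) (j : Fin J),
      G v j = ((θ (Real.sqrt (∑ i, ‖v i‖ ^ 2) / R) : ℝ) : ℂ)
        * ((‖v j‖ : ℝ) : ℂ) ^ 2 * v j) :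
    ∀ u v : Fin J → ℂ,
      Real.sqrt (∑ j, ‖G u j - G v j‖ ^ 2)
        ≤ (12 + 8 * L) * R ^ 2 * Real.sqrt (∑ j, ‖u j - v j‖ ^ 2) :=
  stmt_12_general J R L hR hL θ hθ01 hθ0 hθL G hG
end
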